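/- Let η₁,…,ηₘ be i.i.d. with E[η]=0, E[η²]=1, E[η⁴]<∞, q = η₁+⋯+ηₘ, and define Γ̃(x,m) = log E[exp(x(1 − q²/m))] for x ≥ 0. Then Γ̃(x,m) ≤ x for x ≥ 1, and Γ̃(x,m) ≤ χ₁ x² for 0 ≤ x < 1, where χ₁ = E[η⁴] + 1. In particular Γ̃(x,m) ≤ max(1, χ₁)·x² for all x ≥ 0. -/

import Mathlib

/-!
Put `ζ = 1 - q² / m`, so that `Γ̃(x) = log E[exp (x ζ)]` is the cumulant generating function of
`ζ`. Since `ζ ≤ 1`, `E[exp (x ζ)] ≤ exp x` for `x ≥ 0`, which gives `Γ̃(x) ≤ x`. For `0 ≤ x ≤ 1`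
we have `x ζ ≤ 1`, and `exp t ≤ 1 + t + t²` for `t ≤ 1`; as `E ζ = 0` this yields
`E[exp (x ζ)] ≤ 1 + x² E ζ² ≤ exp (x² E ζ²)`. Finally `E q⁴ = m E η⁴ + 3 m (m - 1)` for an i.i.d.
centred sum with unit variance, so `E ζ² = E q⁴ / m² - 1 ≤ E η⁴ + 1` because `E η⁴ ≥ (E η²)² = 1`.
-/

open MeasureTheory ProbabilityTheory Finset

lemma Real.exp_le_one_add_add_sq {t : ℝ} (ht : t ≤ 1) : Real.exp t ≤ 1 + t + t ^ 2 := by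
  rcases le_or_gt (-1) t with h | h
  · linarith [(abs_le.1 (Real.abs_exp_sub_one_sub_id_le (abs_le.2 ⟨h, ht⟩))).2]
  · nlinarith [Real.exp_lt_one_iff.2 (by linarith : t < 0)]

namespace ProbabilityTheory

variable {Ω : Type*} [MeasurableSpace Ω] {μ : Measure Ω}

lemma integrable_pow_of_even_of_le [IsFiniteMeasure μ] {f : Ω → ℝ}
    (hf : AEStronglyMeasurable f μ) {n k : ℕ} (hn : Even n)
    (hfn : Integrable (fun ω => f ω ^ n) μ) (hk : k ≤ n) :
    Integrable (fun ω => f ω ^ k) μ := by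
  refine ((integrable_const 1).add hfn).mono' (hf.pow k) (ae_of_all _ fun ω => ?_)
  rw [Pi.add_apply, norm_pow, Real.norm_eq_abs, ← hn.pow_abs (f ω)]
  rcases le_total |f ω| 1 with h | h
  · have := pow_le_one₀ (abs_nonneg (f ω)) h (n := k)
    have := pow_nonneg (abs_nonneg (f ω)) n
    linarith
  · have := pow_le_pow_right₀ h hk
    linarith

lemma memLp_two_sq_of_integrable_pow_four {f : Ω → ℝ} (hf : AEStronglyMeasurable f μ)
    (hf4 : Integrable (fun ω => f ω ^ 4) μ) : MemLp (fun ω => f ω ^ 2) 2 μ :=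
  (memLp_two_iff_integrable_sq (hf.pow 2)).2 (by simpa only [Pi.pow_apply, ← pow_mul] using hf4)

lemma cgf_le_of_mgf_le_exp {Z : Ω → ℝ} {t y : ℝ} (hy : 0 ≤ y) (h : mgf Z μ t ≤ Real.exp y) :
    cgf Z μ t ≤ y := by
  rcases (mgf_nonneg (X := Z) (μ := μ) (t := t)).eq_or_lt with h0 | h0
  · simp [cgf, ← h0, hy]
  · exact (Real.log_le_iff_le_exp h0).2 h

variable {X Y : Ω → ℝ}

lemma IndepFun.integrable_pow_mul_pow (hXY : X ⟂ᵢ[μ] Y) {a b : ℕ}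
    (hX : Integrable (fun ω => X ω ^ a) μ) (hY : Integrable (fun ω => Y ω ^ b) μ) :
    Integrable (fun ω => X ω ^ a * Y ω ^ b) μ :=
  (hXY.comp (measurable_id.pow_const a) (measurable_id.pow_const b)).integrable_mul hX hY

lemma IndepFun.integral_pow_mul_pow (hXY : X ⟂ᵢ[μ] Y) (hX : AEStronglyMeasurable X μ)
    (hY : AEStronglyMeasurable Y μ) (a b : ℕ) :
    ∫ ω, X ω ^ a * Y ω ^ b ∂μ = (∫ ω, X ω ^ a ∂μ) * ∫ ω, Y ω ^ b ∂μ :=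
  (hXY.comp (measurable_id.pow_const a)
    (measurable_id.pow_const b)).integral_fun_mul_eq_mul_integral (hX.pow a) (hY.pow b)

lemma IndepFun.integrable_add_pow (hXY : X ⟂ᵢ[μ] Y) {n : ℕ}
    (hX : ∀ k ≤ n, Integrable (fun ω => X ω ^ k) μ)
    (hY : ∀ k ≤ n, Integrable (fun ω => Y ω ^ k) μ) :
    Integrable (fun ω => (X ω + Y ω) ^ n) μ := by
  simp_rw [add_pow]
  refine integrable_finsetSum _ fun k hk => ?_
  have hk : k ≤ n := Nat.lt_succ_iff.1 (mem_range.1 hk)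
  exact (hXY.integrable_pow_mul_pow (hX k hk) (hY (n - k) (Nat.sub_le n k))).mul_const _

lemma IndepFun.integral_add_pow (hXY : X ⟂ᵢ[μ] Y) (hXm : AEStronglyMeasurable X μ)
    (hYm : AEStronglyMeasurable Y μ) {n : ℕ}
    (hX : ∀ k ≤ n, Integrable (fun ω => X ω ^ k) μ)
    (hY : ∀ k ≤ n, Integrable (fun ω => Y ω ^ k) μ) :
    ∫ ω, (X ω + Y ω) ^ n ∂μ =
      ∑ k ∈ range (n + 1), (∫ ω, X ω ^ k ∂μ) * (∫ ω, Y ω ^ (n - k) ∂μ) * n.choose k := by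
  simp_rw [add_pow]
  rw [integral_finsetSum _ fun k hk => ?_]
  · simp_rw [integral_mul_const, hXY.integral_pow_mul_pow hXm hYm]
  have hk : k ≤ n := Nat.lt_succ_iff.1 (mem_range.1 hk)
  exact (hXY.integrable_pow_mul_pow (hX k hk) (hY (n - k) (Nat.sub_le n k))).mul_const _

variable [IsProbabilityMeasure μ]

lemma IndepFun.integral_add_sq_of_integral_eq_zero (hXY : X ⟂ᵢ[μ] Y)
    (hXm : AEStronglyMeasurable X μ) (hYm : AEStronglyMeasurable Y μ)
    (hX2 : Integrable (fun ω => X ω ^ 2) μ) (hY2 : Integrable (fun ω => Y ω ^ 2) μ)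
    (hX : μ[X] = 0) (hY : μ[Y] = 0) :
    ∫ ω, (X ω + Y ω) ^ 2 ∂μ = ∫ ω, X ω ^ 2 ∂μ + ∫ ω, Y ω ^ 2 ∂μ := by
  rw [hXY.integral_add_pow hXm hYm (fun k => integrable_pow_of_even_of_le hXm even_two hX2)
    (fun k => integrable_pow_of_even_of_le hYm even_two hY2)]
  simp [sum_range_succ, hX, hY]
  ring

lemma IndepFun.integral_add_pow_four_of_integral_eq_zero (hXY : X ⟂ᵢ[μ] Y)
    (hXm : AEStronglyMeasurable X μ) (hYm : AEStronglyMeasurable Y μ)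
    (hX4 : Integrable (fun ω => X ω ^ 4) μ) (hY4 : Integrable (fun ω => Y ω ^ 4) μ)
    (hX : μ[X] = 0) (hY : μ[Y] = 0) :
    ∫ ω, (X ω + Y ω) ^ 4 ∂μ =
      ∫ ω, X ω ^ 4 ∂μ + 6 * (∫ ω, X ω ^ 2 ∂μ) * (∫ ω, Y ω ^ 2 ∂μ) + ∫ ω, Y ω ^ 4 ∂μ := by
  rw [hXY.integral_add_pow hXm hYm
    (fun k => integrable_pow_of_even_of_le hXm (by decide) hX4)
    (fun k => integrable_pow_of_even_of_le hYm (by decide) hY4)]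
  simp [sum_range_succ, hX, hY, Nat.choose]
  ring

lemma iIndepFun.moments_sum_range {η : ℕ → Ω → ℝ} (hmeas : ∀ i, Measurable (η i))
    (hindep : iIndepFun η μ) (hident : ∀ i, IdentDistrib (η i) (η 0) μ μ)
    (hmean : μ[η 0] = 0) (hmom4 : Integrable (fun ω => η 0 ω ^ 4) μ) (n : ℕ) :
    Integrable (fun ω => (∑ i ∈ range n, η i ω) ^ 4) μ ∧
    μ[fun ω => ∑ i ∈ range n, η i ω] = 0 ∧
    ∫ ω, (∑ i ∈ range n, η i ω) ^ 2 ∂μ = n * ∫ ω, η 0 ω ^ 2 ∂μ ∧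
    ∫ ω, (∑ i ∈ range n, η i ω) ^ 4 ∂μ =
      n * ∫ ω, η 0 ω ^ 4 ∂μ + 3 * n * (n - 1) * (∫ ω, η 0 ω ^ 2 ∂μ) ^ 2 := by
  have hpow (i k : ℕ) : IdentDistrib (fun ω => η i ω ^ k) (fun ω => η 0 ω ^ k) μ μ :=
    (hident i).comp (measurable_id.pow_const k)
  have hint4 (i : ℕ) : Integrable (fun ω => η i ω ^ 4) μ := (hpow i 4).integrable_iff.2 hmom4
  have hmean_i (i : ℕ) : μ[η i] = 0 := (hident i).integral_eq.trans hmean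
  induction n with
  | zero => simp
  | succ n ih =>
    obtain ⟨hS4, hS1, hS2, hS4_eq⟩ := ih
    set S : Ω → ℝ := fun ω => ∑ i ∈ range n, η i ω
    have hSm : Measurable S := Finset.measurable_fun_sum _ fun i _ => hmeas i
    have hSη : S ⟂ᵢ[μ] η n := by
      simpa only [S, ← sum_fn] using hindep.indepFun_sum_range_succ hmeas n
    have hSk (k : ℕ) (hk : k ≤ 4) : Integrable (fun ω => S ω ^ k) μ :=
      integrable_pow_of_even_of_le hSm.aestronglyMeasurable (by decide) hS4 hk
    have hηk (k : ℕ) (hk : k ≤ 4) : Integrable (fun ω => η n ω ^ k) μ :=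
      integrable_pow_of_even_of_le (hmeas n).aestronglyMeasurable (by decide) (hint4 n) hk
    simp only [sum_range_succ]
    refine ⟨hSη.integrable_add_pow hSk hηk, ?_, ?_, ?_⟩
    · rw [integral_add (by simpa using hSk 1 (by norm_num)) (by simpa using hηk 1 (by norm_num)),
        hS1, hmean_i, add_zero]
    · rw [hSη.integral_add_sq_of_integral_eq_zero hSm.aestronglyMeasurable
        (hmeas n).aestronglyMeasurable (hSk 2 (by norm_num)) (hηk 2 (by norm_num)) hS1
        (hmean_i n), hS2, (hpow n 2).integral_eq]
      push_cast; ring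
    · rw [hSη.integral_add_pow_four_of_integral_eq_zero hSm.aestronglyMeasurable
        (hmeas n).aestronglyMeasurable hS4 (hint4 n) hS1 (hmean_i n), hS2, hS4_eq,
        (hpow n 2).integral_eq, (hpow n 4).integral_eq]
      push_cast; ring

lemma sq_integral_le_integral_sq {f : Ω → ℝ} (hf : MemLp f 2 μ) :
    μ[f] ^ 2 ≤ ∫ ω, f ω ^ 2 ∂μ := by
  have := variance_nonneg f μ
  rw [variance_eq_sub hf] at this
  simpa using this

section OneSubSqDiv

variable {S : Ω → ℝ} {c : ℝ}

lemma integral_one_sub_sq_div (hS2 : Integrable (fun ω => S ω ^ 2) μ)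
    (hc : ∫ ω, S ω ^ 2 ∂μ = c) (hc0 : c ≠ 0) :
    ∫ ω, (1 - S ω ^ 2 / c) ∂μ = 0 := by
  rw [integral_sub (integrable_const 1) (hS2.div_const c), integral_div, hc, div_self hc0]
  simp

lemma integral_one_sub_sq_div_sq (hS : AEStronglyMeasurable S μ)
    (hS4 : Integrable (fun ω => S ω ^ 4) μ) (hc : ∫ ω, S ω ^ 2 ∂μ = c) (hc0 : c ≠ 0) :
    ∫ ω, (1 - S ω ^ 2 / c) ^ 2 ∂μ = (∫ ω, S ω ^ 4 ∂μ) / c ^ 2 - 1 := by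
  have hS2 : Integrable (fun ω => S ω ^ 2) μ :=
    integrable_pow_of_even_of_le hS (by decide) hS4 (by norm_num)
  have hlin : Integrable (fun ω => 1 - 2 * (S ω ^ 2 / c)) μ :=
    (integrable_const 1).sub ((hS2.div_const c).const_mul 2)
  have hexpand (ω : Ω) :
      (1 - S ω ^ 2 / c) ^ 2 = 1 - 2 * (S ω ^ 2 / c) + S ω ^ 4 / c ^ 2 := by ring
  simp_rw [hexpand]
  rw [integral_add hlin (hS4.div_const _),
    integral_sub (integrable_const 1) ((hS2.div_const c).const_mul 2), integral_const_mul,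
    integral_div, integral_div, hc, div_self hc0]
  simp only [integral_const, probReal_univ, smul_eq_mul, mul_one]
  ring

end OneSubSqDiv

section CGF

variable {Z : Ω → ℝ} {t : ℝ}

lemma cgf_le_of_le_one (hZ : ∀ᵐ ω ∂μ, Z ω ≤ 1) (ht : 0 ≤ t) : cgf Z μ t ≤ t := by
  refine cgf_le_of_mgf_le_exp ht ?_
  calc mgf Z μ t ≤ ∫ _, Real.exp t ∂μ :=
        integral_mono_of_nonneg (ae_of_all _ fun ω => (Real.exp_pos _).le) (integrable_const _)
          (hZ.mono fun ω hω => Real.exp_le_exp.2 (mul_le_of_le_one_right ht hω))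
    _ = Real.exp t := by simp

lemma mgf_le_one_add_mul_sq (hZm : AEStronglyMeasurable Z μ) (hZ : ∀ᵐ ω ∂μ, Z ω ≤ 1)
    (hZ2 : Integrable (fun ω => Z ω ^ 2) μ) (hmean : μ[Z] = 0) (ht0 : 0 ≤ t) (ht1 : t ≤ 1) :
    mgf Z μ t ≤ 1 + (∫ ω, Z ω ^ 2 ∂μ) * t ^ 2 := by
  have hZint : Integrable Z μ := by
    simpa using integrable_pow_of_even_of_le hZm even_two hZ2 (k := 1) (by norm_num)
  have hlin : Integrable (fun ω => t * Z ω + t ^ 2 * Z ω ^ 2) μ :=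
    (hZint.const_mul t).add (hZ2.const_mul (t ^ 2))
  calc mgf Z μ t ≤ ∫ ω, (1 + (t * Z ω + t ^ 2 * Z ω ^ 2)) ∂μ := by
        refine integral_mono_of_nonneg (ae_of_all _ fun ω => (Real.exp_pos _).le)
          ((integrable_const 1).add hlin) (hZ.mono fun ω hω => ?_)
        have := Real.exp_le_one_add_add_sq ((mul_le_of_le_one_right ht0 hω).trans ht1)
        linarith
    _ = 1 + (∫ ω, Z ω ^ 2 ∂μ) * t ^ 2 := by
        rw [integral_add (integrable_const 1) hlin, integral_add (hZint.const_mul t)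
          (hZ2.const_mul (t ^ 2)), integral_const_mul, integral_const_mul, hmean]
        simp only [integral_const, probReal_univ, smul_eq_mul, mul_one]
        ring

lemma cgf_le_mul_sq (hZm : AEStronglyMeasurable Z μ) (hZ : ∀ᵐ ω ∂μ, Z ω ≤ 1)
    (hZ2 : Integrable (fun ω => Z ω ^ 2) μ) (hmean : μ[Z] = 0) (ht0 : 0 ≤ t) (ht1 : t ≤ 1) :
    cgf Z μ t ≤ (∫ ω, Z ω ^ 2 ∂μ) * t ^ 2 := by
  have hZ2_nonneg : 0 ≤ ∫ ω, Z ω ^ 2 ∂μ := integral_nonneg fun ω => sq_nonneg _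
  refine cgf_le_of_mgf_le_exp (by positivity) ?_
  calc mgf Z μ t ≤ 1 + (∫ ω, Z ω ^ 2 ∂μ) * t ^ 2 :=
        mgf_le_one_add_mul_sq hZm hZ hZ2 hmean ht0 ht1
    _ ≤ Real.exp ((∫ ω, Z ω ^ 2 ∂μ) * t ^ 2) := by
        linarith [Real.add_one_le_exp ((∫ ω, Z ω ^ 2 ∂μ) * t ^ 2)]

end CGF

end ProbabilityTheory

theorem log_laplace_bound_centered_square
    {Ω : Type*} [MeasurableSpace Ω] (μ : Measure Ω) [IsProbabilityMeasure μ]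
    (η : ℕ → Ω → ℝ)
    (hmeas : ∀ i, Measurable (η i))
    (hindep : iIndepFun η μ)
    (hident : ∀ i, IdentDistrib (η i) (η 0) μ μ)
    (hmean : μ[η 0] = 0)
    (hvar : μ[fun ω => (η 0 ω) ^ 2] = 1)
    (hmom4 : Integrable (fun ω => (η 0 ω) ^ 4) μ)
    (m : ℕ) (hm : 1 ≤ m)
    (Γ : ℝ → ℝ)
    (hΓ : ∀ x, Γ x = Real.log
      (μ[fun ω => Real.exp (x * (1 - (∑ i ∈ Finset.range m, η i ω) ^ 2 / m))])) :
    (∀ x : ℝ, 1 ≤ x → Γ x ≤ x)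
    ∧ (∀ x : ℝ, 0 ≤ x → x < 1 → Γ x ≤ (μ[fun ω => (η 0 ω) ^ 4] + 1) * x ^ 2)
    ∧ (∀ x : ℝ, 0 ≤ x → Γ x ≤ max 1 (μ[fun ω => (η 0 ω) ^ 4] + 1) * x ^ 2) := by
  obtain ⟨hS4, -, hS2, hS4_eq⟩ := hindep.moments_sum_range hmeas hident hmean hmom4 m
  set κ := μ[fun ω => (η 0 ω) ^ 4]
  set S : Ω → ℝ := fun ω => ∑ i ∈ range m, η i ω
  set Z : Ω → ℝ := fun ω => 1 - S ω ^ 2 / m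
  rw [hvar, mul_one] at hS2
  have hm1 : (1 : ℝ) ≤ m := by exact_mod_cast hm
  have hm0 : (m : ℝ) ≠ 0 := by positivity
  have hSm : AEStronglyMeasurable S μ :=
    (Finset.measurable_fun_sum _ fun i _ => hmeas i).aestronglyMeasurable
  have hS_sq : MemLp (fun ω => S ω ^ 2) 2 μ := memLp_two_sq_of_integrable_pow_four hSm hS4
  have hZm : AEStronglyMeasurable Z μ := by fun_prop
  have hZ_le : ∀ᵐ ω ∂μ, Z ω ≤ 1 := ae_of_all _ fun ω => sub_le_self _ (by positivity)
  have hZ2 : Integrable (fun ω => Z ω ^ 2) μ :=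
    ((memLp_const 1).sub (hS_sq.mul_const (m : ℝ)⁻¹)).integrable_sq
  have hZ_mean : μ[Z] = 0 := integral_one_sub_sq_div (hS_sq.integrable one_le_two) hS2 hm0
  have hκ : 1 ≤ κ := by
    simpa [hvar, ← pow_mul] using sq_integral_le_integral_sq
      (memLp_two_sq_of_integrable_pow_four (hmeas 0).aestronglyMeasurable hmom4)
  have hZ_var : ∫ ω, Z ω ^ 2 ∂μ ≤ κ + 1 := by
    rw [integral_one_sub_sq_div_sq hSm hS4 hS2 hm0, hS4_eq, hvar, div_sub_one (by positivity),
      div_le_iff₀ (by positivity)]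
    -- the slack is `(κ - 1) m (m - 1) + 2 m`
    nlinarith [mul_nonneg (sub_nonneg.2 hκ) (mul_nonneg (by positivity : (0 : ℝ) ≤ m)
      (sub_nonneg.2 hm1))]
  have hlarge (x : ℝ) (hx : 1 ≤ x) : Γ x ≤ x :=
    (hΓ x).trans_le (cgf_le_of_le_one hZ_le (by linarith))
  have hsmall (x : ℝ) (hx0 : 0 ≤ x) (hx1 : x < 1) : Γ x ≤ (κ + 1) * x ^ 2 :=
    (hΓ x).trans_le ((cgf_le_mul_sq hZm hZ_le hZ2 hZ_mean hx0 hx1.le).trans (by gcongr))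
  refine ⟨hlarge, hsmall, fun x hx => ?_⟩
  rcases lt_or_ge x 1 with hx1 | hx1
  · exact (hsmall x hx hx1).trans (by gcongr; exact le_max_right _ _)
  · calc Γ x ≤ 1 * x ^ 2 := by nlinarith [hlarge x hx1]
      _ ≤ _ := by gcongr; exact le_max_left _ _
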